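/- Let L ~ Binomial(k, γ) and E := E_L[(1/2)·log(1 + L·β_min²/γ)] with β_min > 0. If γk > 3, then (1/4)·log(1 + kβ_min²/3) ≤ E ≤ (1/2)·log(1 + kβ_min²). -/

import Mathlib

open Real Finset Polynomial

lemma bern_eval (k l : ℕ) (γ : ℝ) :
    (bernsteinPolynomial ℝ k l).eval γ = (Nat.choose k l : ℝ) * γ ^ l * (1 - γ) ^ (k - l) := by
  simp [bernsteinPolynomial]

lemma binom_sum (k : ℕ) (γ : ℝ) :
    ∑ l ∈ Finset.range (k + 1), (Nat.choose k l : ℝ) * γ ^ l * (1 - γ) ^ (k - l) = 1 := by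
  have := congrArg (Polynomial.eval γ) (bernsteinPolynomial.sum ℝ k)
  simpa [Polynomial.eval_finset_sum, bern_eval] using this

lemma binom_mean (k : ℕ) (γ : ℝ) :
    ∑ l ∈ Finset.range (k + 1),
      (l : ℝ) * ((Nat.choose k l : ℝ) * γ ^ l * (1 - γ) ^ (k - l)) = k * γ := by
  have := congrArg (Polynomial.eval γ) (bernsteinPolynomial.sum_smul ℝ k)
  simpa [Polynomial.eval_finset_sum, bern_eval] using this

lemma binom_mom2 (k : ℕ) (γ : ℝ) :
    ∑ l ∈ Finset.range (k + 1),
      (l : ℝ) * ((l : ℝ) - 1) * ((Nat.choose k l : ℝ) * γ ^ l * (1 - γ) ^ (k - l))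
      = k * ((k:ℝ) - 1) * γ ^ 2 := by
  have := congrArg (Polynomial.eval γ) (bernsteinPolynomial.sum_mul_smul ℝ k)
  simp only [Polynomial.eval_finset_sum, Polynomial.eval_smul, bern_eval, nsmul_eq_mul, Polynomial.eval_mul, Polynomial.eval_natCast,
    Polynomial.eval_pow, Polynomial.eval_X] at this
  rw [show (k * ((k:ℝ) - 1) * γ ^ 2) = ((k * (k-1) : ℕ) : ℝ) * γ ^ 2 by
    rcases k with _ | m <;> push_cast <;> ring]
  rw [← this]
  apply Finset.sum_congr rfl
  intro l _
  rcases l with _ | m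
  · simp
  · push_cast
    ring

set_option maxHeartbeats 1000000 in
theorem binomial_log_expectation_large (k : ℕ) (γ βmin : ℝ)
    (hk : 1 ≤ k) (hγ0 : 0 < γ) (hγ1 : γ ≤ 1) (hβ : 0 < βmin)
    (hlarge : 3 < γ * k) :
    (1 / 4) * Real.log (1 + (k : ℝ) * βmin ^ 2 / 3) ≤
      (∑ l ∈ Finset.range (k + 1),
        (Nat.choose k l : ℝ) * γ ^ l * (1 - γ) ^ (k - l) *
          ((1 / 2) * Real.log (1 + (l : ℝ) * βmin ^ 2 / γ))) ∧
    (∑ l ∈ Finset.range (k + 1),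
        (Nat.choose k l : ℝ) * γ ^ l * (1 - γ) ^ (k - l) *
          ((1 / 2) * Real.log (1 + (l : ℝ) * βmin ^ 2 / γ)))
      ≤ (1 / 2) * Real.log (1 + (k : ℝ) * βmin ^ 2) := by
  set p : ℕ → ℝ := fun l => (Nat.choose k l : ℝ) * γ ^ l * (1 - γ) ^ (k - l) with hp
  have hp0 : ∀ l ∈ Finset.range (k + 1), 0 ≤ p l := by
    intro l _
    have h1 : (0:ℝ) ≤ 1 - γ := by linarith
    positivity
  have h1sum : ∑ l ∈ Finset.range (k + 1), p l = 1 := binom_sum k γ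
  have hmean : ∑ l ∈ Finset.range (k + 1), (l:ℝ) * p l = k * γ := binom_mean k γ
  have hmom2 : ∑ l ∈ Finset.range (k + 1), (l:ℝ) * ((l:ℝ) - 1) * p l = k * ((k:ℝ) - 1) * γ ^ 2 :=
    binom_mom2 k γ
  have hrw : ∀ l, ((Nat.choose k l : ℝ) * γ ^ l * (1 - γ) ^ (k - l)) = p l := fun _ => rfl
  simp only [hrw]
  clear_value p
  set μ : ℝ := γ * k with hμ
  have hμ3 : 3 < μ := hlarge
  have hμpos : 0 < μ := by linarith
  clear_value μ
  constructor
  · -- lower bound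
    set A : ℝ := Real.log (1 + (k : ℝ) * βmin ^ 2 / 3) with hA
    have hA0 : 0 ≤ A := Real.log_nonneg (le_add_of_nonneg_right (by positivity))
    clear_value A
    -- pointwise inequality
    have hpt : ∀ l ∈ Finset.range (k + 1),
        p l * ((1/2) * A * (1 - (4*μ/3 - (l:ℝ))^2 / μ^2)) ≤
        p l * ((1/2) * Real.log (1 + (l : ℝ) * βmin ^ 2 / γ)) := by
      intro l hl
      apply mul_le_mul_of_nonneg_left _ (hp0 l hl)
      have hlog0 : 0 ≤ Real.log (1 + (l : ℝ) * βmin ^ 2 / γ) :=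
        Real.log_nonneg (le_add_of_nonneg_right (by positivity))
      rcases le_or_gt (μ/3) (l:ℝ) with hc | hc
      · have harg : 1 + (k : ℝ) * βmin ^ 2 / 3 ≤ 1 + (l : ℝ) * βmin ^ 2 / γ := by
          have : (k : ℝ) * βmin ^ 2 / 3 ≤ (l : ℝ) * βmin ^ 2 / γ := by
            rw [div_le_div_iff₀ (by norm_num) hγ0]
            nlinarith [sq_nonneg βmin]
          linarith
        have h1 : A ≤ Real.log (1 + (l : ℝ) * βmin ^ 2 / γ) := by
          rw [hA]; exact Real.log_le_log (by positivity) harg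
        have hd : 0 ≤ (4*μ/3 - (l:ℝ))^2 / μ^2 := by positivity
        nlinarith
      · have hsq : μ^2 ≤ (4*μ/3 - (l:ℝ))^2 := by nlinarith
        have hd : 1 ≤ (4*μ/3 - (l:ℝ))^2 / μ^2 := by
          rw [le_div_iff₀ (by positivity)]; linarith
        nlinarith
    have hsq : ∑ l ∈ Finset.range (k + 1), p l * (4*μ/3 - (l:ℝ))^2
        = μ^2/9 + μ - k * γ^2 := by
      have he : ∀ l ∈ Finset.range (k + 1), p l * (4*μ/3 - (l:ℝ))^2
          = (16/9*μ^2) * p l + (1 - 8/3*μ) * ((l:ℝ) * p l)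
            + (l:ℝ) * ((l:ℝ) - 1) * p l := by
        intro l _; ring
      rw [Finset.sum_congr rfl he]
      rw [Finset.sum_add_distrib, Finset.sum_add_distrib, ← Finset.mul_sum, ← Finset.mul_sum,
        h1sum, hmean, hmom2]
      rw [hμ]; ring
    have hlhs : ∑ l ∈ Finset.range (k + 1),
        p l * ((1/2) * A * (1 - (4*μ/3 - (l:ℝ))^2 / μ^2))
        = (1/2) * A - (1/2) * A / μ^2 * (μ^2/9 + μ - k * γ^2) := by
      have he : ∀ l ∈ Finset.range (k + 1),
          p l * ((1/2) * A * (1 - (4*μ/3 - (l:ℝ))^2 / μ^2))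
          = (1/2) * A * p l - ((1/2) * A / μ^2) * (p l * (4*μ/3 - (l:ℝ))^2) := by
        intro l _; field_simp
      rw [Finset.sum_congr rfl he, Finset.sum_sub_distrib, ← Finset.mul_sum, ← Finset.mul_sum,
        h1sum, hsq]
      ring
    have hmain := Finset.sum_le_sum hpt
    rw [hlhs] at hmain
    refine le_trans ?_ hmain
    have hkγ2 : 0 ≤ (k:ℝ) * γ^2 := by positivity
    have hfrac : (μ^2/9 + μ - (k:ℝ) * γ^2) / (2*μ^2) ≤ 1/4 := by
      rw [div_le_iff₀ (by positivity)]; nlinarith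
    have h2 : (1:ℝ)/2 * A / μ^2 * (μ^2/9 + μ - (k:ℝ) * γ^2)
        = A * ((μ^2/9 + μ - (k:ℝ) * γ^2) / (2*μ^2)) := by ring
    have h3 : A * ((μ^2/9 + μ - (k:ℝ) * γ^2) / (2*μ^2)) ≤ A * (1/4) :=
      mul_le_mul_of_nonneg_left hfrac hA0
    linarith
  · -- upper bound (Jensen)
    have hconc : ConcaveOn ℝ (Set.Ioi 0) Real.log := strictConcaveOn_log_Ioi.concaveOn
    have hmem : ∀ l ∈ Finset.range (k + 1), (1 + (l : ℝ) * βmin ^ 2 / γ) ∈ Set.Ioi (0:ℝ) := by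
      intro l _; simp only [Set.mem_Ioi]; positivity
    have hjen := ConcaveOn.le_map_sum (𝕜 := ℝ) (f := Real.log) (s := Set.Ioi 0)
      (t := Finset.range (k+1)) (w := p) (p := fun l => 1 + (l:ℝ)*βmin^2/γ) hconc hp0 h1sum hmem
    simp only [smul_eq_mul] at hjen
    have hz : ∑ l ∈ Finset.range (k + 1), p l * (1 + (l : ℝ) * βmin ^ 2 / γ)
        = 1 + (k : ℝ) * βmin ^ 2 := by
      have he : ∀ l ∈ Finset.range (k + 1), p l * (1 + (l : ℝ) * βmin ^ 2 / γ)
          = p l + (βmin ^ 2 / γ) * ((l:ℝ) * p l) := by intro l _; ring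
      rw [Finset.sum_congr rfl he, Finset.sum_add_distrib, ← Finset.mul_sum, h1sum, hmean]
      field_simp
    rw [hz] at hjen
    have he2 : ∀ l ∈ Finset.range (k + 1),
        p l * ((1/2) * Real.log (1 + (l : ℝ) * βmin ^ 2 / γ))
        = (1/2) * (p l * Real.log (1 + (l : ℝ) * βmin ^ 2 / γ)) := by intro l _; ring
    rw [Finset.sum_congr rfl he2, ← Finset.mul_sum]
    linarith
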